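/- arXiv:0712.3840 — 2 statements merged into one kernel-verified Lean document; each statement's English description precedes it below -/
import Mathlib

section
/- Let U = (u,v) be harmonic in the unit disk B, C¹ up to the boundary, with det DU > 0 on ∂B. Then det DU > 0 everywhere in B if and only if there exists α ∈ [0,2π] such that ∇(cos(α)·u + sin(α)·v) ≠ 0 everywhere in B. -/
/-!
With the Wirtinger derivatives `∂U`, `∂̄U` one has `det DU = |∂U|² - |∂̄U|²`. For a harmonic map
`a = e^{-iα} ∂U` and `b = e^{iα} conj (∂̄U)` are holomorphic in the disk, and `a + b` is the complex
gradient of `cos α u + sin α v`. If that gradient never vanishes, `(a - b) / (a + b)` is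
holomorphic, and its real part `(|a|² - |b|²) / |a + b|²` is positive on the circle; by the
minimum principle it stays positive inside, which is `det DU > 0`. Conversely, `|b| < |a|`
forces `a + b ≠ 0`.
-/

open Complex Metric Set MeasureTheory Filter

noncomputable def pd2 (u : ℂ → ℝ) (w z : ℂ) : ℝ :=
  fderiv ℝ (fun x => fderiv ℝ u x w) z w

def HarmOn (u : ℂ → ℝ) (s : Set ℂ) : Prop :=
  ContDiffOn ℝ 2 u s ∧ ∀ z ∈ s, pd2 u 1 z + pd2 u Complex.I z = 0

def HarmMapOn (U : ℂ → ℂ) (s : Set ℂ) : Prop :=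
  HarmOn (fun z => (U z).re) s ∧ HarmOn (fun z => (U z).im) s

noncomputable def jacDet (U : ℂ → ℂ) (z : ℂ) : ℝ :=
  LinearMap.det ((fderivWithin ℝ U (closedBall (0:ℂ) 1) z) : ℂ →ₗ[ℝ] ℂ)

noncomputable def jacDetB (U : ℂ → ℂ) (z : ℂ) : ℝ :=
  LinearMap.det ((fderiv ℝ U z) : ℂ →ₗ[ℝ] ℂ)

def IsHomeoOnto (U : ℂ → ℂ) (s t : Set ℂ) : Prop :=
  ∃ h : s ≃ₜ t, ∀ z : s, (h z : ℂ) = U (z : ℂ)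

def IsDiffeoOnto (U : ℂ → ℂ) (t : Set ℂ) : Prop :=
  ContDiffOn ℝ 1 U (closedBall (0:ℂ) 1) ∧ IsHomeoOnto U (closedBall (0:ℂ) 1) t ∧
    ∀ z ∈ closedBall (0:ℂ) 1, jacDet U z ≠ 0

def WindsOnce (c : ℝ → ℂ) (w : ℂ) : Prop :=
  ∃ a : ℝ → ℝ, Continuous a ∧
    (∀ θ : ℝ, c θ - w = (‖c θ - w‖ : ℂ) * Complex.exp ((a θ : ℂ) * Complex.I)) ∧
    a (2 * Real.pi) = a 0 + 2 * Real.pi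

def TangentWinding (c : ℝ → ℂ) (n : ℤ) : Prop :=
  ∃ a : ℝ → ℝ, Continuous a ∧
    (∀ θ : ℝ, deriv c θ = (‖deriv c θ‖ : ℂ) * Complex.exp ((a θ : ℂ) * Complex.I)) ∧
    a (2 * Real.pi) = a 0 + (n : ℝ) * (2 * Real.pi)

def VanishOrder (f : ℂ → ℂ) (z : ℂ) (n : ℕ) : Prop :=
  ∃ h : ℂ → ℂ, AnalyticAt ℂ h z ∧ h z ≠ 0 ∧ ∀ᶠ w in nhds z, f w = (w - z) ^ n * h w

noncomputable def gradC (u : ℂ → ℝ) (z : ℂ) : ℂ :=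
  (fderiv ℝ u z 1 : ℂ) - (fderiv ℝ u z Complex.I : ℂ) * Complex.I

def CritSum (u : ℂ → ℝ) (M : ℕ) : Prop :=
  ∃ (S : Finset ℂ) (m : ℂ → ℕ),
    (↑S : Set ℂ) = {z | z ∈ ball (0:ℂ) 1 ∧ fderiv ℝ u z = 0} ∧
    (∀ z ∈ S, VanishOrder (gradC u) z (m z)) ∧ ∑ z ∈ S, m z = M

def LocalHomeoAt (U : ℂ → ℂ) (P : ℂ) : Prop :=
  ∃ G ∈ nhds P, Set.InjOn U (G ∩ closedBall (0:ℂ) 1)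

def IsConjOn (u v : ℂ → ℝ) (s : Set ℂ) : Prop :=
  DifferentiableOn ℝ v s ∧ ∀ z ∈ s,
    fderiv ℝ v z 1 = -(fderiv ℝ u z Complex.I) ∧ fderiv ℝ v z Complex.I = fderiv ℝ u z 1

def HilbertPV (g : ℝ → ℝ) (θ L : ℝ) : Prop :=
  Tendsto (fun ε : ℝ =>
      (1 / (2 * Real.pi)) *
        ∫ τ in Ioo (θ - Real.pi) (θ + Real.pi) \ Ioo (θ - ε) (θ + ε),
          g τ / Real.tan ((θ - τ) / 2))
    (nhdsWithin 0 (Ioi 0)) (nhds L)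

noncomputable def wderivZ (U : ℂ → ℂ) (z : ℂ) : ℂ :=
  (fderivWithin ℝ U (closedBall (0:ℂ) 1) z 1 -
    Complex.I * fderivWithin ℝ U (closedBall (0:ℂ) 1) z Complex.I) / 2

noncomputable def wderivZbar (U : ℂ → ℂ) (z : ℂ) : ℂ :=
  (fderivWithin ℝ U (closedBall (0:ℂ) 1) z 1 +
    Complex.I * fderivWithin ℝ U (closedBall (0:ℂ) 1) z Complex.I) / 2

noncomputable def angDeriv (u : ℂ → ℝ) (τ : ℝ) : ℝ :=
  fderivWithin ℝ u (closedBall (0:ℂ) 1) (Complex.exp ((τ : ℂ) * Complex.I))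
    (Complex.I * Complex.exp ((τ : ℂ) * Complex.I))

noncomputable def radDeriv (u : ℂ → ℝ) (θ : ℝ) : ℝ :=
  fderivWithin ℝ u (closedBall (0:ℂ) 1) (Complex.exp ((θ : ℂ) * Complex.I))
    (Complex.exp ((θ : ℂ) * Complex.I))

open ComplexConjugate

namespace Complex

theorem realCLM_ext {E : Type*} [NormedAddCommGroup E] [NormedSpace ℝ E] {L L' : ℂ →L[ℝ] E}
    (h1 : L 1 = L' 1) (hI : L I = L' I) : L = L' :=
  ContinuousLinearMap.coe_injective (basisOneI.ext fun i => by fin_cases i <;> simpa)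

theorem det_realCLM_eq_norm_sq_sub_norm_sq (L : ℂ →L[ℝ] ℂ) :
    LinearMap.det (L : ℂ →ₗ[ℝ] ℂ) =
      ‖(L 1 - I * L I) / 2‖ ^ 2 - ‖(L 1 + I * L I) / 2‖ ^ 2 := by
  rw [← LinearMap.det_toMatrix basisOneI, Matrix.det_fin_two, ← normSq_eq_norm_sq,
    ← normSq_eq_norm_sq]
  simp [LinearMap.toMatrix_apply, normSq_apply]
  ring

theorem cos_re_add_sin_im_comp_eq_zero_iff (L : ℂ →L[ℝ] ℂ) (α : ℝ) :
    (Real.cos α • reCLM + Real.sin α • imCLM).comp L = 0 ↔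
      exp (↑(-α) * I) * ((L 1 - I * L I) / 2) + exp (α * I) * conj ((L 1 + I * L I) / 2) = 0 := by
  set w := exp (↑(-α) * I) * ((L 1 - I * L I) / 2) + exp (α * I) * conj ((L 1 + I * L I) / 2)
  have hw : w.re = Real.cos α * (L 1).re + Real.sin α * (L 1).im ∧
      w.im = -(Real.cos α * (L I).re + Real.sin α * (L I).im) := by
    simp only [w, exp_mul_I, ← ofReal_cos, ← ofReal_sin, Real.cos_neg, Real.sin_neg]
    constructor <;> simp [map_div₀, map_ofNat, -ofReal_cos, -ofReal_sin] <;> ring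
  rw [Complex.ext_iff, hw.1, hw.2, zero_re, zero_im, neg_eq_zero]
  constructor
  · intro h
    have h1 := congrArg (fun L => L 1) h
    have hI := congrArg (fun L => L I) h
    simp only [ContinuousLinearMap.comp_apply, add_apply, smul_apply, reCLM_apply,
      imCLM_apply, smul_eq_mul, zero_apply] at h1 hI
    exact ⟨h1, hI⟩
  · rintro ⟨h1, hI⟩
    apply realCLM_ext <;> simpa

end Complex

theorem DiffContOnCl.re_pos_of_forall_mem_frontier {q : ℂ → ℂ} {s : Set ℂ}
    (hs : Bornology.IsBounded s) (hq : DiffContOnCl ℂ q s)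
    (hfr : ∀ z ∈ frontier s, 0 < (q z).re) {z : ℂ} (hz : z ∈ closure s) : 0 < (q z).re := by
  obtain ⟨ε, hε, hεq⟩ := (hs.isCompact_closure.of_isClosed_subset isClosed_frontier
    frontier_subset_closure).exists_forall_le'
    (Complex.continuous_re.comp_continuousOn (hq.continuousOn.mono frontier_subset_closure)) hfr
  -- `‖exp (-q)‖ = exp (-re q)`, so the maximum modulus principle bounds `re q` from below
  have hexp : DiffContOnCl ℂ (fun w => exp (-q w)) s := ⟨hq.1.neg.cexp, hq.2.neg.cexp⟩
  have hbound := Complex.norm_le_of_forall_mem_frontier_norm_le hs hexp (C := Real.exp (-ε))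
    (fun w hw => by
      rw [Complex.norm_exp, neg_re, Real.exp_le_exp]
      exact neg_le_neg (hεq w hw)) hz
  rw [Complex.norm_exp, neg_re, Real.exp_le_exp] at hbound
  linarith

theorem Complex.re_sub_div_add_pos_iff {a b : ℂ} (h : a + b ≠ 0) :
    0 < ((a - b) / (a + b)).re ↔ ‖b‖ < ‖a‖ := by
  have hN : 0 < normSq (a + b) := normSq_pos.mpr h
  have hre : ((a - b) / (a + b)).re = (normSq a - normSq b) / normSq (a + b) := by
    rw [div_re, ← add_div, normSq_apply a, normSq_apply b]
    congr 1
    simp only [sub_re, add_re, sub_im, add_im]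
    ring
  rw [hre, div_pos_iff_of_pos_right hN, sub_pos, normSq_eq_norm_sq, normSq_eq_norm_sq]
  exact pow_lt_pow_iff_left₀ (norm_nonneg _) (norm_nonneg _) two_ne_zero

theorem DiffContOnCl.norm_lt_norm_of_forall_mem_frontier {a b : ℂ → ℂ} {s : Set ℂ}
    (hs : Bornology.IsBounded s) (ha : DiffContOnCl ℂ a s) (hb : DiffContOnCl ℂ b s)
    (hfr : ∀ z ∈ frontier s, ‖b z‖ < ‖a z‖) (hne : ∀ z ∈ s, a z + b z ≠ 0) {z : ℂ}
    (hz : z ∈ s) : ‖b z‖ < ‖a z‖ := by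
  have hne' : ∀ w ∈ closure s, a w + b w ≠ 0 := by
    rw [closure_eq_self_union_frontier]
    rintro w (hw | hw) hab
    · exact hne w hw hab
    · have hlt := hfr w hw
      rw [eq_neg_of_add_eq_zero_left hab, norm_neg] at hlt
      exact hlt.false
  have hq : DiffContOnCl ℂ (fun w => (a w - b w) / (a w + b w)) s :=
    ⟨(ha.1.sub hb.1).div (ha.1.add hb.1) fun w hw => hne' w (subset_closure hw),
      (ha.2.sub hb.2).div (ha.2.add hb.2) hne'⟩
  refine (Complex.re_sub_div_add_pos_iff (hne z hz)).1 (hq.re_pos_of_forall_mem_frontier hs ?_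
    (subset_closure hz))
  exact fun w hw => (Complex.re_sub_div_add_pos_iff (hne' w (frontier_subset_closure hw))).2
    (hfr w hw)

theorem HarmOn.harmonicAt {u : ℂ → ℝ} {s : Set ℂ} (hu : HarmOn u s) (hs : IsOpen s) {z : ℂ}
    (hz : z ∈ s) : InnerProductSpace.HarmonicAt u z := by
  refine ⟨hu.1.contDiffAt (hs.mem_nhds hz), ?_⟩
  filter_upwards [hs.mem_nhds hz] with w hw
  have hd : DifferentiableAt ℝ (fderiv ℝ u) w :=
    ((hu.1.contDiffAt (hs.mem_nhds hw)).fderiv_right (m := 1) (by norm_num)).differentiableAt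
      one_ne_zero
  have hpd2 : ∀ v, pd2 u v w = fderiv ℝ (fderiv ℝ u) w v v := fun v => by
    rw [pd2, fderiv_clm_apply hd (differentiableAt_const v)]
    simp
  simpa [InnerProductSpace.laplacian_eq_iteratedFDeriv_complexPlane, iteratedFDeriv_two_apply,
    ← hpd2] using hu.2 w hw

theorem HarmOn.differentiableOn_gradC {u : ℂ → ℝ} {s : Set ℂ} (hu : HarmOn u s)
    (hs : IsOpen s) : DifferentiableOn ℂ (gradC u) s := fun z hz => by
  have hgrad : gradC u = fun w => fderiv ℝ u w 1 - I * fderiv ℝ u w I := by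
    ext w
    rw [gradC, mul_comm]
  rw [hgrad]
  exact (HarmonicAt.differentiableAt_complex_partial (hu.harmonicAt hs hz)).differentiableWithinAt

theorem continuousOn_fderivWithin_closedBall {U : ℂ → ℂ}
    (hU : ContDiffOn ℝ 1 U (closedBall (0:ℂ) 1)) :
    ContinuousOn (fderivWithin ℝ U (closedBall (0:ℂ) 1)) (closedBall (0:ℂ) 1) :=
  hU.continuousOn_fderivWithin (uniqueDiffOn_convex (convex_closedBall 0 1)
    (by simp [interior_closedBall (0:ℂ) one_ne_zero])) le_rfl

theorem jacDet_eq_norm_sq_sub_norm_sq (U : ℂ → ℂ) (z : ℂ) :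
    jacDet U z = ‖wderivZ U z‖ ^ 2 - ‖wderivZbar U z‖ ^ 2 :=
  Complex.det_realCLM_eq_norm_sq_sub_norm_sq _

theorem jacDet_pos_iff {U : ℂ → ℂ} {z : ℂ} :
    0 < jacDet U z ↔ ‖wderivZbar U z‖ < ‖wderivZ U z‖ := by
  rw [jacDet_eq_norm_sq_sub_norm_sq, sub_pos]
  exact pow_lt_pow_iff_left₀ (norm_nonneg _) (norm_nonneg _) two_ne_zero

theorem fderiv_smul_re_add_smul_im {U : ℂ → ℂ} {z : ℂ} (hU : DifferentiableAt ℝ U z) (c s : ℝ) :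
    fderiv ℝ (fun w => c * (U w).re + s * (U w).im) z =
      (c • reCLM + s • imCLM).comp (fderiv ℝ U z) :=
  ((c • reCLM + s • imCLM).hasFDerivAt.comp z hU.hasFDerivAt).fderiv

theorem gradC_re_comp {U : ℂ → ℂ} {z : ℂ} (hU : DifferentiableAt ℝ U z) :
    gradC (fun w => (U w).re) z = ((fderiv ℝ U z 1).re : ℂ) - ((fderiv ℝ U z I).re : ℂ) * I := by
  have h : HasFDerivAt (fun w => (U w).re) (reCLM.comp (fderiv ℝ U z)) z :=
    reCLM.hasFDerivAt.comp z hU.hasFDerivAt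
  simp [gradC, h.fderiv]

theorem gradC_im_comp {U : ℂ → ℂ} {z : ℂ} (hU : DifferentiableAt ℝ U z) :
    gradC (fun w => (U w).im) z = ((fderiv ℝ U z 1).im : ℂ) - ((fderiv ℝ U z I).im : ℂ) * I := by
  have h : HasFDerivAt (fun w => (U w).im) (imCLM.comp (fderiv ℝ U z)) z :=
    imCLM.hasFDerivAt.comp z hU.hasFDerivAt
  simp [gradC, h.fderiv]

theorem wderivZ_eq_gradC {U : ℂ → ℂ} {z : ℂ} (hU : DifferentiableAt ℝ U z)
    (hz : z ∈ ball (0:ℂ) 1) :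
    wderivZ U z = (gradC (fun w => (U w).re) z + I * gradC (fun w => (U w).im) z) / 2 := by
  rw [wderivZ, fderivWithin_of_mem_nhds (closedBall_mem_nhds_of_mem hz), gradC_re_comp hU,
    gradC_im_comp hU]
  apply Complex.ext <;> simp
  ring

theorem conj_wderivZbar_eq_gradC {U : ℂ → ℂ} {z : ℂ} (hU : DifferentiableAt ℝ U z)
    (hz : z ∈ ball (0:ℂ) 1) :
    conj (wderivZbar U z) =
      (gradC (fun w => (U w).re) z - I * gradC (fun w => (U w).im) z) / 2 := by
  rw [wderivZbar, fderivWithin_of_mem_nhds (closedBall_mem_nhds_of_mem hz), gradC_re_comp hU,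
    gradC_im_comp hU]
  apply Complex.ext <;> simp [map_div₀, map_ofNat] <;> ring

theorem ContDiffOn.differentiableAt_of_mem_ball {E F : Type*} [NormedAddCommGroup E]
    [NormedSpace ℝ E] [NormedAddCommGroup F] [NormedSpace ℝ F] {f : E → F} {c x : E} {r : ℝ}
    (hf : ContDiffOn ℝ 1 f (closedBall c r)) (hx : x ∈ ball c r) : DifferentiableAt ℝ f x :=
  (hf.contDiffAt (closedBall_mem_nhds_of_mem hx)).differentiableAt one_ne_zero

section HarmonicMap

variable {U : ℂ → ℂ}

theorem diffContOnCl_wderivZ (hU : ContDiffOn ℝ 1 U (closedBall (0:ℂ) 1))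
    (hharm : HarmMapOn U (ball (0:ℂ) 1)) : DiffContOnCl ℂ (wderivZ U) (ball (0:ℂ) 1) := by
  have hW := continuousOn_fderivWithin_closedBall hU
  refine .mk_ball (DifferentiableOn.congr ?_ fun z hz =>
    wderivZ_eq_gradC (hU.differentiableAt_of_mem_ball hz) hz) ?_
  · exact ((hharm.1.differentiableOn_gradC isOpen_ball).add
      ((hharm.2.differentiableOn_gradC isOpen_ball).const_mul I)).div_const 2
  · exact ((hW.clm_apply continuousOn_const).sub
      (continuousOn_const.mul (hW.clm_apply continuousOn_const))).div_const 2

theorem diffContOnCl_conj_wderivZbar (hU : ContDiffOn ℝ 1 U (closedBall (0:ℂ) 1))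
    (hharm : HarmMapOn U (ball (0:ℂ) 1)) :
    DiffContOnCl ℂ (fun z => conj (wderivZbar U z)) (ball (0:ℂ) 1) := by
  have hW := continuousOn_fderivWithin_closedBall hU
  refine .mk_ball (DifferentiableOn.congr ?_ fun z hz =>
    conj_wderivZbar_eq_gradC (hU.differentiableAt_of_mem_ball hz) hz) ?_
  · exact ((hharm.1.differentiableOn_gradC isOpen_ball).sub
      ((hharm.2.differentiableOn_gradC isOpen_ball).const_mul I)).div_const 2
  · exact Complex.continuous_conj.comp_continuousOn (((hW.clm_apply continuousOn_const).add
      (continuousOn_const.mul (hW.clm_apply continuousOn_const))).div_const 2)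

end HarmonicMap

/-- `det DU > 0` everywhere in `B` iff some linear combination of the components has
no critical point in `B`. -/
theorem jacobian_pos_iff_exists_direction (U : ℂ → ℂ)
    (hU1 : ContDiffOn ℝ 1 U (closedBall (0:ℂ) 1))
    (hharm : HarmMapOn U (ball (0:ℂ) 1))
    (hjac : ∀ z ∈ sphere (0:ℂ) 1, 0 < jacDet U z) :
    (∀ z ∈ ball (0:ℂ) 1, 0 < jacDet U z) ↔
      ∃ α ∈ Icc (0:ℝ) (2 * Real.pi), ∀ z ∈ ball (0:ℂ) 1,
        fderiv ℝ (fun w => Real.cos α * (U w).re + Real.sin α * (U w).im) z ≠ 0 := by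
  set a : ℝ → ℂ → ℂ := fun α z => exp (↑(-α) * I) * wderivZ U z
  set b : ℝ → ℂ → ℂ := fun α z => exp (α * I) * conj (wderivZbar U z)
  have hgrad : ∀ α, ∀ z ∈ ball (0:ℂ) 1,
      fderiv ℝ (fun w => Real.cos α * (U w).re + Real.sin α * (U w).im) z = 0 ↔
        a α z + b α z = 0 := fun α z hz => by
    rw [fderiv_smul_re_add_smul_im (hU1.differentiableAt_of_mem_ball hz),
      ← fderivWithin_of_mem_nhds (closedBall_mem_nhds_of_mem hz),
      Complex.cos_re_add_sin_im_comp_eq_zero_iff]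
    rfl
  have hjac_iff : ∀ α z, 0 < jacDet U z ↔ ‖b α z‖ < ‖a α z‖ := fun α z => by
    simp only [a, b, norm_mul, Complex.norm_exp_ofReal_mul_I, RCLike.norm_conj, one_mul]
    exact jacDet_pos_iff
  constructor
  · intro hpos
    refine ⟨0, ⟨le_rfl, by positivity⟩, fun z hz h0 => ?_⟩
    have hlt := (hjac_iff 0 z).1 (hpos z hz)
    rw [eq_neg_of_add_eq_zero_left ((hgrad 0 z hz).1 h0), norm_neg] at hlt
    exact hlt.false
  · rintro ⟨α, -, hα⟩ z hz
    have ha : DiffContOnCl ℂ (a α) (ball (0:ℂ) 1) :=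
      (diffContOnCl_const (c := exp (↑(-α) * I))).smul (diffContOnCl_wderivZ hU1 hharm)
    have hb : DiffContOnCl ℂ (b α) (ball (0:ℂ) 1) :=
      (diffContOnCl_const (c := exp (α * I))).smul
        (diffContOnCl_conj_wderivZbar hU1 hharm)
    refine (hjac_iff α z).2 (ha.norm_lt_norm_of_forall_mem_frontier isBounded_ball hb
      (fun w hw => ?_) (fun w hw => (hgrad α w hw).not.1 (hα w hw)) hz)
    rw [frontier_ball (0:ℂ) one_ne_zero] at hw
    exact (hjac_iff α w).1 (hjac w hw)
end

section
/- Let U = (u,v) ∈ C¹ up to the closed unit disk be harmonic in B with det DU > 0 on ∂B, let Φ = U|∂B, let ũ be the harmonic conjugate of u, and f = u + i·ũ. Then the winding numbers of the boundary curves coincide: WN(f(∂B)) = WN(Φ(∂B)). -/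
open Complex Metric Set MeasureTheory Filter

/-!
On the unit circle the Cauchy–Riemann equations `∂ũ/∂(i w) = ∂u/∂w`, extended from `B` to the
closed disk by continuity of the derivatives, give the tangent of `θ ↦ f(e^{iθ})` as
`P = Re Q + i Re (DU(z) z)`, where `z = e^{iθ}` and `Q = DU(z)(i z)` is the tangent of `Φ`.
The cross product of `DU(z) z` and `DU(z)(i z)` is `det DU(z) > 0`, which forces `Q / P` off the
ray `(-∞, 0]`. Hence `θ ↦ arg (Q / P)` is continuous and `2π`-periodic, and adding it to an
argument of `P` gives an argument of `Q` with the same increment over `[0, 2π]`.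
-/

open scoped Real Topology

def IsArgLift {X : Type*} (c : X → ℂ) (a : X → ℝ) : Prop :=
  ∀ x, c x = ‖c x‖ * exp (a x * I)

namespace IsArgLift

variable {X : Type*} {c d : X → ℂ} {a b : X → ℝ}

theorem mul (hc : IsArgLift c a) (hd : IsArgLift d b) : IsArgLift (c * d) (a + b) := by
  intro x
  simp only [Pi.mul_apply, Pi.add_apply, norm_mul, ofReal_mul, ofReal_add, add_mul, exp_add]
  rw [hc x, hd x]
  simp only [norm_mul, norm_exp_ofReal_mul_I, mul_one, Complex.norm_of_nonneg (norm_nonneg _)]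
  ring

theorem arg (c : X → ℂ) : IsArgLift c fun x => (c x).arg :=
  fun x => (norm_mul_exp_arg_mul_I (c x)).symm

theorem sub_mem_zmultiples (ha : IsArgLift c a) (hb : IsArgLift c b) {x : X} (hx : c x ≠ 0) :
    a x - b x ∈ AddSubgroup.zmultiples (2 * π) := by
  have hnorm : (‖c x‖ : ℂ) ≠ 0 := ofReal_ne_zero.mpr (norm_ne_zero_iff.mpr hx)
  obtain ⟨k, hk⟩ := exp_eq_exp_iff_exists_int.mp (mul_left_cancel₀ hnorm ((ha x).symm.trans (hb x)))
  refine ⟨k, ?_⟩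
  have hk' : (a x : ℂ) * I = (b x + k * (2 * π) : ℝ) * I := by rw [hk]; push_cast; ring
  have := ofReal_injective (mul_right_cancel₀ I_ne_zero hk')
  simp only [zsmul_eq_mul]
  linarith

variable [TopologicalSpace X] [PreconnectedSpace X]

theorem sub_eq_sub (ha : IsArgLift c a) (hb : IsArgLift c b) (hac : Continuous a)
    (hbc : Continuous b) (hc : ∀ x, c x ≠ 0) (x y : X) : a x - b x = a y - b y :=
  isPreconnected_univ.constant_of_mapsTo
    (SetLike.isDiscrete_iff_discreteTopology.mpr inferInstance) (hac.sub hbc).continuousOn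
    (fun z _ => ha.sub_mem_zmultiples hb (hc z)) trivial trivial

theorem sub_eq_sub_of_div_mem_slitPlane (ha : IsArgLift c a) (hb : IsArgLift d b)
    (hac : Continuous a) (hbc : Continuous b) (hc : Continuous c) (hd : Continuous d)
    (hslit : ∀ x, d x / c x ∈ slitPlane) {x y : X} (hcxy : c x = c y) (hdxy : d x = d y) :
    b x - b y = a x - a y := by
  have hc0 : ∀ x, c x ≠ 0 := fun x h => slitPlane_ne_zero (hslit x) (by rw [h, div_zero])
  have hd0 : ∀ x, d x ≠ 0 := fun x h => slitPlane_ne_zero (hslit x) (by rw [h, zero_div])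
  have hd_eq : d = c * fun x => d x / c x := funext fun x => (mul_div_cancel₀ _ (hc0 x)).symm
  have hlift : IsArgLift d (a + fun x => (d x / c x).arg) := by
    have := ha.mul (IsArgLift.arg fun x => d x / c x)
    rwa [← hd_eq] at this
  have harg : Continuous fun x => (d x / c x).arg :=
    continuous_iff_continuousAt.mpr fun x =>
      (continuousAt_arg (hslit x)).comp (f := fun x => d x / c x) (hd.div hc hc0).continuousAt
  have := hb.sub_eq_sub hlift hbc (hac.add harg) hd0 x y
  simp only [Pi.add_apply, hcxy, hdxy] at this
  linarith

end IsArgLift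

theorem TangentWinding.eq_of_div_mem_slitPlane {γ δ : ℝ → ℂ} {m n : ℤ}
    (hγ : TangentWinding γ m) (hδ : TangentWinding δ n)
    (hγc : Continuous (deriv γ)) (hδc : Continuous (deriv δ))
    (hγp : deriv γ (2 * π) = deriv γ 0) (hδp : deriv δ (2 * π) = deriv δ 0)
    (hslit : ∀ θ, deriv δ θ / deriv γ θ ∈ slitPlane) : m = n := by
  obtain ⟨a, hac, ha, ha2π⟩ := hγ
  obtain ⟨b, hbc, hb, hb2π⟩ := hδ
  have := IsArgLift.sub_eq_sub_of_div_mem_slitPlane ha hb hac hbc hγc hδc hslit hγp hδp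
  have h : (n : ℝ) * (2 * π) = m * (2 * π) := by linarith
  exact_mod_cast (mul_right_cancel₀ Real.two_pi_pos.ne' h).symm

theorem div_mem_slitPlane_of_cross_pos {u v : ℂ} (h : 0 < u.re * v.im - u.im * v.re) :
    v / (v.re + u.re * I) ∈ slitPlane := by
  set p : ℂ := v.re + u.re * I
  have hp_re : p.re = v.re := by simp [p]
  have hp_im : p.im = u.re := by simp [p]
  have hp : 0 < normSq p := by
    rw [normSq_apply, hp_re, hp_im]
    by_contra hle
    have hv : v.re = 0 := by nlinarith
    have hu : u.re = 0 := by nlinarith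
    simp [hv, hu] at h
  rw [mem_slitPlane_iff, div_re, div_im, hp_re, hp_im, ← add_div, ← sub_div]
  by_contra! hcon
  obtain ⟨hre, him⟩ := hcon
  replace hre : v.re * v.re + v.im * u.re ≤ 0 := by
    by_contra! hlt; exact (div_pos hlt hp).not_ge hre
  rw [div_eq_zero_iff, or_iff_left hp.ne'] at him
  rw [normSq_apply, hp_re, hp_im] at hp
  rcases mul_eq_zero.mp (show v.re * (v.im - u.re) = 0 by linarith) with hv | hv
  · rw [hv] at hre h; nlinarith
  · rw [sub_eq_zero.mp hv] at hre; linarith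

theorem ContinuousLinearMap.apply_eq_re_smul_add_im_smul {F : Type*} [AddCommGroup F]
    [Module ℝ F] [TopologicalSpace F] (L : ℂ →L[ℝ] F) (w : ℂ) :
    L w = w.re • L 1 + w.im • L I := by
  rw [← map_smul, ← map_smul, ← map_add]
  congr 1
  apply Complex.ext <;> simp

theorem ContinuousLinearMap.det_mul_normSq (L : ℂ →L[ℝ] ℂ) (z : ℂ) :
    LinearMap.det (L : ℂ →ₗ[ℝ] ℂ) * normSq z =
      (L z).re * (L (I * z)).im - (L z).im * (L (I * z)).re := by
  rw [← LinearMap.det_toMatrix basisOneI, Matrix.det_fin_two, L.apply_eq_re_smul_add_im_smul z,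
    L.apply_eq_re_smul_add_im_smul (I * z)]
  simp only [LinearMap.toMatrix_apply, coe_basisOneI, coe_basisOneI_repr, Matrix.cons_val_zero,
    Matrix.cons_val_one, Matrix.cons_val_fin_one, coe_coe, normSq_apply, real_smul, add_re, add_im,
    mul_re, mul_im, ofReal_re, ofReal_im, I_re, I_im]
  ring

theorem uniqueDiffOn_closedBall {E : Type*} [NormedAddCommGroup E] [NormedSpace ℝ E]
    (c : E) {r : ℝ} (hr : 0 < r) : UniqueDiffOn ℝ (closedBall c r) :=
  uniqueDiffOn_convex (convex_closedBall c r) (by simp [interior_closedBall c hr.ne', hr])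

theorem fderiv_re_apply {U : ℂ → ℂ} {z : ℂ} (hU : DifferentiableAt ℝ U z) (w : ℂ) :
    fderiv ℝ (fun z => (U z).re) z w = (fderiv ℝ U z w).re := by
  have h : HasFDerivAt (fun z => (U z).re) (reCLM.comp (fderiv ℝ U z)) z :=
    reCLM.hasFDerivAt.comp z hU.hasFDerivAt
  rw [h.fderiv]
  rfl

theorem IsConjOn.fderiv_I_mul {U : ℂ → ℂ} {W : ℂ → ℝ} {s : Set ℂ}
    (hconj : IsConjOn (fun z => (U z).re) W s) {z : ℂ} (hz : z ∈ s)
    (hU : DifferentiableAt ℝ U z) (w : ℂ) :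
    fderiv ℝ W z (I * w) = (fderiv ℝ U z w).re := by
  obtain ⟨h1, hI⟩ := hconj.2 z hz
  rw [ContinuousLinearMap.apply_eq_re_smul_add_im_smul _ (I * w), h1, hI,
    ContinuousLinearMap.apply_eq_re_smul_add_im_smul _ w, fderiv_re_apply hU, fderiv_re_apply hU]
  simp only [mul_re, mul_im, I_re, I_im, smul_eq_mul, real_smul, add_re, ofReal_re, ofReal_im]
  ring

theorem IsConjOn.fderivWithin_closedBall_I_mul {U : ℂ → ℂ} {W : ℂ → ℝ} {c : ℂ} {r : ℝ}
    (hconj : IsConjOn (fun z => (U z).re) W (ball c r)) (hr : 0 < r)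
    (hU : ContDiffOn ℝ 1 U (closedBall c r)) (hW : ContDiffOn ℝ 1 W (closedBall c r))
    {z : ℂ} (hz : z ∈ closedBall c r) (w : ℂ) :
    fderivWithin ℝ W (closedBall c r) z (I * w) = (fderivWithin ℝ U (closedBall c r) z w).re := by
  have hs := uniqueDiffOn_closedBall c hr
  refine Set.EqOn.of_subset_closure (s := ball c r) (fun z hz => ?_)
    ((hW.continuousOn_fderivWithin hs le_rfl).clm_apply continuousOn_const)
    (continuous_re.comp_continuousOn
      ((hU.continuousOn_fderivWithin hs le_rfl).clm_apply continuousOn_const))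
    ball_subset_closedBall (closure_ball c hr.ne').superset hz
  have hnhds : closedBall c r ∈ 𝓝 z :=
    mem_of_superset (isOpen_ball.mem_nhds hz) ball_subset_closedBall
  simp only [Function.comp_apply, fderivWithin_of_mem_nhds hnhds]
  exact hconj.fderiv_I_mul hz ((hU.differentiableOn one_ne_zero).differentiableAt hnhds) w

theorem exp_ofReal_mul_I_mem_sphere (θ : ℝ) : exp (θ * I) ∈ sphere (0 : ℂ) 1 := by
  simp [norm_exp_ofReal_mul_I]

section UnitCircle

variable {F : Type*} [NormedAddCommGroup F] [NormedSpace ℝ F]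

theorem hasDerivAt_comp_exp_mul_I {g : ℂ → F} {s : Set ℂ} (hs : sphere (0 : ℂ) 1 ⊆ s) {θ : ℝ}
    (hg : DifferentiableWithinAt ℝ g s (exp (θ * I))) :
    HasDerivAt (fun t : ℝ => g (exp (t * I)))
      (fderivWithin ℝ g s (exp (θ * I)) (I * exp (θ * I))) θ := by
  have he : HasDerivAt (fun t : ℝ => exp (t * I)) (I * exp (θ * I)) θ := by
    simpa [mul_comm] using ((hasDerivAt_id θ).ofReal_comp.mul_const I).cexp
  exact hg.hasFDerivWithinAt.comp_hasDerivAt θ he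
    (Eventually.of_forall fun t => hs (exp_ofReal_mul_I_mem_sphere t))

theorem deriv_comp_exp_mul_I {g : ℂ → F} (hg : DifferentiableOn ℝ g (closedBall (0 : ℂ) 1))
    (θ : ℝ) :
    deriv (fun t : ℝ => g (exp (t * I))) θ =
      fderivWithin ℝ g (closedBall 0 1) (exp (θ * I)) (I * exp (θ * I)) :=
  (hasDerivAt_comp_exp_mul_I sphere_subset_closedBall
    (hg _ (sphere_subset_closedBall (exp_ofReal_mul_I_mem_sphere θ)))).deriv

theorem continuous_fderivWithin_comp_exp_mul_I {g : ℂ → F}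
    (hg : ContDiffOn ℝ 1 g (closedBall (0 : ℂ) 1)) {v : ℝ → ℂ} (hv : Continuous v) :
    Continuous fun θ : ℝ => fderivWithin ℝ g (closedBall (0 : ℂ) 1) (exp (θ * I)) (v θ) := by
  exact ((hg.continuousOn_fderivWithin (uniqueDiffOn_closedBall 0 one_pos) le_rfl).comp_continuous
    (by fun_prop) fun θ => sphere_subset_closedBall (exp_ofReal_mul_I_mem_sphere θ)).clm_apply hv

end UnitCircle

theorem deriv_comp_exp_mul_I_of_isConjOn {U f : ℂ → ℂ} {W : ℂ → ℝ}
    (hU : ContDiffOn ℝ 1 U (closedBall (0 : ℂ) 1)) (hW : ContDiffOn ℝ 1 W (closedBall (0 : ℂ) 1))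
    (hconj : IsConjOn (fun z => (U z).re) W (ball (0 : ℂ) 1))
    (hf : ∀ z, f z = (U z).re + W z * I) (θ : ℝ) :
    deriv (fun t : ℝ => f (exp (t * I))) θ =
      ((fderivWithin ℝ U (closedBall 0 1) (exp (θ * I)) (I * exp (θ * I))).re : ℂ) +
        ((fderivWithin ℝ U (closedBall 0 1) (exp (θ * I)) (exp (θ * I))).re : ℂ) * I := by
  have hz := sphere_subset_closedBall (exp_ofReal_mul_I_mem_sphere θ)
  have hUd := hasDerivAt_comp_exp_mul_I sphere_subset_closedBall
    ((hU.differentiableOn one_ne_zero) _ hz)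
  have hWd := hasDerivAt_comp_exp_mul_I sphere_subset_closedBall
    ((hW.differentiableOn one_ne_zero) _ hz)
  have hUre : HasDerivAt (fun t : ℝ => ((U (exp (t * I))).re : ℂ))
      ((fderivWithin ℝ U (closedBall 0 1) (exp (θ * I)) (I * exp (θ * I))).re : ℂ) θ :=
    (reCLM.hasFDerivAt.comp_hasDerivAt θ hUd).ofReal_comp
  rw [← hconj.fderivWithin_closedBall_I_mul one_pos hU hW hz (exp (θ * I))]
  simp only [hf]
  exact (hUre.add (hWd.ofReal_comp.mul_const I)).deriv

theorem winding_f_eq_winding_Phi_general (U : ℂ → ℂ) (uConj : ℂ → ℝ) (f : ℂ → ℂ)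
    (hU1 : ContDiffOn ℝ 1 U (closedBall (0:ℂ) 1))
    (hjac : ∀ z ∈ sphere (0:ℂ) 1, 0 < jacDet U z)
    (huConj1 : ContDiffOn ℝ 1 uConj (closedBall (0:ℂ) 1))
    (hconj : IsConjOn (fun z => (U z).re) uConj (ball (0:ℂ) 1))
    (hf : ∀ z, f z = (((U z).re : ℝ) : ℂ) + (uConj z : ℂ) * Complex.I) :
    ∀ m n : ℤ,
      TangentWinding (fun θ : ℝ => f (Complex.exp ((θ : ℂ) * Complex.I))) m →
      TangentWinding (fun θ : ℝ => U (Complex.exp ((θ : ℂ) * Complex.I))) n →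
      m = n := by
  intro m n hm hn
  have hP := funext (deriv_comp_exp_mul_I_of_isConjOn hU1 huConj1 hconj hf)
  have hQ := funext (deriv_comp_exp_mul_I (hU1.differentiableOn one_ne_zero))
  have hQc :=
    continuous_fderivWithin_comp_exp_mul_I hU1 (v := fun θ => I * exp (θ * I)) (by fun_prop)
  have hRc := continuous_fderivWithin_comp_exp_mul_I hU1 (v := fun θ => exp (θ * I)) (by fun_prop)
  have hper : exp ((2 * π : ℝ) * I) = exp ((0 : ℝ) * I) := by
    push_cast; rw [exp_two_pi_mul_I, zero_mul, exp_zero]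
  refine hm.eq_of_div_mem_slitPlane hn ?_ ?_ ?_ ?_ fun θ => ?_
  · rw [hP]; fun_prop
  · rwa [hQ]
  · simp only [hP, hper]
  · simp only [hQ, hper]
  · rw [hP, hQ]
    apply div_mem_slitPlane_of_cross_pos
    have hz := exp_ofReal_mul_I_mem_sphere θ
    rw [← ContinuousLinearMap.det_mul_normSq, normSq_eq_norm_sq, mem_sphere_zero_iff_norm.mp hz,
      one_pow, mul_one]
    exact hjac _ hz

/-- The winding number of `f(∂B)` equals that of `Φ(∂B) = U(∂B)`. -/
theorem winding_f_eq_winding_Phi (U : ℂ → ℂ) (uConj : ℂ → ℝ) (f : ℂ → ℂ)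
    (hU1 : ContDiffOn ℝ 1 U (closedBall (0:ℂ) 1))
    (hharm : HarmMapOn U (ball (0:ℂ) 1))
    (hjac : ∀ z ∈ sphere (0:ℂ) 1, 0 < jacDet U z)
    (huConj1 : ContDiffOn ℝ 1 uConj (closedBall (0:ℂ) 1))
    (hconj : IsConjOn (fun z => (U z).re) uConj (ball (0:ℂ) 1))
    (hf : ∀ z, f z = (((U z).re : ℝ) : ℂ) + (uConj z : ℂ) * Complex.I) :
    ∀ m n : ℤ,
      TangentWinding (fun θ : ℝ => f (Complex.exp ((θ : ℂ) * Complex.I))) m →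
      TangentWinding (fun θ : ℝ => U (Complex.exp ((θ : ℂ) * Complex.I))) n →
      m = n :=
  winding_f_eq_winding_Phi_general U uConj f hU1 hjac huConj1 hconj hf
end
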